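/- Let ξ ~ N(0, 1/2), τ > 0, ε > 0. The derivative of ν(θ) = E[(εξ + θ)²·1{ξ > (τ-θ)/ε}] with respect to θ, for 0 ≤ θ < τ, equals θ + ((ε² + τ²)/(ε√π))·e^{-((τ-θ)/ε)²} - θ·erf((τ-θ)/ε), and this derivative is strictly positive; hence ν is strictly increasing on [0, τ). -/

import Mathlib

open MeasureTheory Set

noncomputable def erf (x : ℝ) : ℝ := 2 / Real.sqrt Real.pi * ∫ t in (0:ℝ)..x, Real.exp (-t ^ 2)

noncomputable def nu (τ ε θ : ℝ) : ℝ :=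
  ∫ x in Ioi ((τ - θ) / ε), (ε * x + θ) ^ 2 * (Real.exp (-x ^ 2) / Real.sqrt Real.pi)

open Real Filter Topology

lemma cont_exp_neg_sq : Continuous (fun t : ℝ => Real.exp (-t ^ 2)) := by continuity

lemma exp_neg_sq_integrableOn : IntegrableOn (fun t : ℝ => Real.exp (-t ^ 2)) (Ioi 0) := by
  have : Integrable (fun t : ℝ => Real.exp (-(1:ℝ) * t ^ 2)) := integrable_exp_neg_mul_sq one_pos
  simpa using this.integrableOn

lemma sqrt_pi_pos : 0 < Real.sqrt Real.pi := Real.sqrt_pos.2 Real.pi_pos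

lemma hasDerivAt_erf (x : ℝ) :
    HasDerivAt erf (2 / Real.sqrt Real.pi * Real.exp (-x ^ 2)) x := by
  have h : HasDerivAt (fun u => ∫ t in (0:ℝ)..u, Real.exp (-t ^ 2)) (Real.exp (-x ^ 2)) x := by
    apply intervalIntegral.integral_hasDerivAt_right
    · exact cont_exp_neg_sq.intervalIntegrable _ _
    · exact cont_exp_neg_sq.stronglyMeasurableAtFilter _ _
    · exact cont_exp_neg_sq.continuousAt
  exact h.const_mul (2 / Real.sqrt Real.pi)

lemma integral_Ioi_zero : (∫ t in Ioi (0:ℝ), Real.exp (-t ^ 2)) = Real.sqrt Real.pi / 2 := by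
  have := integral_gaussian_Ioi 1
  simp only [neg_mul, one_mul, div_one] at this
  simpa using this

lemma tendsto_erf : Tendsto erf atTop (𝓝 1) := by
  have h := intervalIntegral_tendsto_integral_Ioi 0 exp_neg_sq_integrableOn tendsto_id
  have h2 := h.const_mul (2 / Real.sqrt Real.pi)
  rw [integral_Ioi_zero] at h2
  have : 2 / Real.sqrt Real.pi * (Real.sqrt Real.pi / 2) = 1 := by
    field_simp
  rw [this] at h2
  exact h2.congr (fun x => rfl)

lemma erf_le_one {a : ℝ} (ha : 0 ≤ a) : erf a ≤ 1 := by
  have h1 : (∫ t in (0:ℝ)..a, Real.exp (-t ^ 2)) ≤ ∫ t in Ioi (0:ℝ), Real.exp (-t ^ 2) := by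
    rw [intervalIntegral.integral_of_le ha]
    apply setIntegral_mono_set exp_neg_sq_integrableOn
    · filter_upwards with t using (Real.exp_pos _).le
    · exact HasSubset.Subset.eventuallyLE Ioc_subset_Ioi_self
  rw [integral_Ioi_zero] at h1
  have h2 : erf a ≤ 2 / Real.sqrt Real.pi * (Real.sqrt Real.pi / 2) := by
    unfold erf
    apply mul_le_mul_of_nonneg_left h1 (by positivity)
  calc erf a ≤ _ := h2
    _ = 1 := by field_simp

lemma tendsto_mul_exp_neg_sq : Tendsto (fun x : ℝ => x * Real.exp (-x ^ 2)) atTop (𝓝 0) := by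
  have h1 : Tendsto (fun x : ℝ => x * Real.exp (-x)) atTop (𝓝 0) := by
    simpa using Real.tendsto_pow_mul_exp_neg_atTop_nhds_zero 1
  apply squeeze_zero' (g := fun x : ℝ => x * Real.exp (-x))
  · filter_upwards [eventually_ge_atTop (0:ℝ)] with x hx
    positivity
  · filter_upwards [eventually_ge_atTop (1:ℝ)] with x hx
    have : -x ^ 2 ≤ -x := by nlinarith
    exact mul_le_mul_of_nonneg_left (Real.exp_le_exp.2 this) (by linarith)
  · exact h1

lemma tendsto_exp_neg_sq : Tendsto (fun x : ℝ => Real.exp (-x ^ 2)) atTop (𝓝 0) := by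
  apply Real.tendsto_exp_atBot.comp
  apply tendsto_neg_atBot_iff.2
  exact tendsto_pow_atTop (by norm_num)

/-- closed form antiderivative derivative -/
lemma hasDerivAt_G (ε θ : ℝ) (x : ℝ) :
    HasDerivAt (fun x : ℝ => (-(ε ^ 2 * x / 2 + ε * θ)) * Real.exp (-x ^ 2) / Real.sqrt Real.pi
        + (ε ^ 2 / 4 + θ ^ 2 / 2) * erf x)
      ((ε * x + θ) ^ 2 * (Real.exp (-x ^ 2) / Real.sqrt Real.pi)) x := by
  have h1 : HasDerivAt (fun x : ℝ => -(ε ^ 2 * x / 2 + ε * θ)) (-(ε ^ 2 / 2)) x := by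
    have : HasDerivAt (fun x : ℝ => ε ^ 2 * x / 2 + ε * θ) (ε ^ 2 / 2) x := by
      simpa using (((hasDerivAt_id x).const_mul (ε ^ 2)).div_const 2).add_const (ε * θ)
    exact this.neg
  have h2 : HasDerivAt (fun x : ℝ => Real.exp (-x ^ 2)) ((-(2 * x)) * Real.exp (-x ^ 2)) x := by
    have hx : HasDerivAt (fun x : ℝ => -x ^ 2) (-(2 * x)) x := by
      have := (hasDerivAt_pow 2 x).neg; simp at this; exact this
    have := (Real.hasDerivAt_exp (-x ^ 2)).comp x hx; simp [mul_comm] at this ⊢; exact this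
  have h3 := ((h1.mul h2).div_const (Real.sqrt Real.pi)).add
    ((hasDerivAt_erf x).const_mul (ε ^ 2 / 4 + θ ^ 2 / 2))
  refine HasDerivAt.congr_deriv h3 ?_
  have hπ : Real.sqrt Real.pi ≠ 0 := ne_of_gt sqrt_pi_pos
  field_simp
  ring

lemma nu_eq (τ ε θ : ℝ) (hε : 0 < ε) :
    nu τ ε θ = (ε ^ 2 / 4 + θ ^ 2 / 2)
      - ((-(ε ^ 2 * ((τ - θ) / ε) / 2 + ε * θ)) * Real.exp (-((τ - θ) / ε) ^ 2) / Real.sqrt Real.pi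
        + (ε ^ 2 / 4 + θ ^ 2 / 2) * erf ((τ - θ) / ε)) := by
  set a := (τ - θ) / ε with ha
  have hG := fun x => hasDerivAt_G ε θ x
  have hlim : Tendsto (fun x : ℝ => (-(ε ^ 2 * x / 2 + ε * θ)) * Real.exp (-x ^ 2) / Real.sqrt Real.pi
      + (ε ^ 2 / 4 + θ ^ 2 / 2) * erf x) atTop (𝓝 (ε ^ 2 / 4 + θ ^ 2 / 2)) := by
    have t1 : Tendsto (fun x : ℝ => (-(ε ^ 2 * x / 2 + ε * θ)) * Real.exp (-x ^ 2) / Real.sqrt Real.pi)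
        atTop (𝓝 0) := by
      have : (fun x : ℝ => (-(ε ^ 2 * x / 2 + ε * θ)) * Real.exp (-x ^ 2) / Real.sqrt Real.pi)
          = fun x : ℝ => (-(ε ^ 2 / 2) * (x * Real.exp (-x ^ 2)) - ε * θ * Real.exp (-x ^ 2)) / Real.sqrt Real.pi := by
        funext x; ring
      rw [this]
      have := ((tendsto_mul_exp_neg_sq.const_mul (-(ε ^ 2 / 2))).sub
        (tendsto_exp_neg_sq.const_mul (ε * θ))).div_const (Real.sqrt Real.pi)
      simpa using this
    have t2 := (tendsto_erf.const_mul (ε ^ 2 / 4 + θ ^ 2 / 2))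
    simpa using t1.add t2
  have key := integral_Ioi_of_hasDerivAt_of_nonneg ((hG a).continuousAt.continuousWithinAt)
    (fun x _ => hG x) (fun x _ => by positivity) hlim
  rw [nu, ← ha, key]

lemma nu_fun_eq (τ ε : ℝ) (hε : 0 < ε) : nu τ ε = fun θ =>
    (ε ^ 2 / 4 + θ ^ 2 / 2)
      - ((-(ε ^ 2 * ((τ - θ) / ε) / 2 + ε * θ)) * Real.exp (-((τ - θ) / ε) ^ 2) / Real.sqrt Real.pi
        + (ε ^ 2 / 4 + θ ^ 2 / 2) * erf ((τ - θ) / ε)) := by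
  funext θ; exact nu_eq τ ε θ hε

theorem stmt_5 (τ ε : ℝ) (hτ : 0 < τ) (hε : 0 < ε) :
    (∀ θ ∈ Ico (0:ℝ) τ,
      HasDerivAt (nu τ ε)
        (θ + (ε ^ 2 + τ ^ 2) / (ε * Real.sqrt Real.pi) * Real.exp (-((τ - θ) / ε) ^ 2)
          - θ * erf ((τ - θ) / ε)) θ ∧
      0 < θ + (ε ^ 2 + τ ^ 2) / (ε * Real.sqrt Real.pi) * Real.exp (-((τ - θ) / ε) ^ 2)
          - θ * erf ((τ - θ) / ε)) ∧
    StrictMonoOn (nu τ ε) (Ico 0 τ) := by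
  have hπ : (0:ℝ) < Real.sqrt Real.pi := sqrt_pi_pos
  have hderiv : ∀ θ : ℝ, HasDerivAt (nu τ ε)
      (θ + (ε ^ 2 + τ ^ 2) / (ε * Real.sqrt Real.pi) * Real.exp (-((τ - θ) / ε) ^ 2)
        - θ * erf ((τ - θ) / ε)) θ := by
    intro θ
    rw [nu_fun_eq τ ε hε]
    have ha : HasDerivAt (fun θ : ℝ => (τ - θ) / ε) (-(1 / ε)) θ := by
      have := ((hasDerivAt_id θ).const_sub τ).div_const ε
      refine HasDerivAt.congr_deriv this ?_
      ring
    have hq : HasDerivAt (fun θ : ℝ => ε ^ 2 / 4 + θ ^ 2 / 2) θ θ := by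
      have := ((hasDerivAt_pow 2 θ).div_const 2).const_add (ε ^ 2 / 4)
      refine HasDerivAt.congr_deriv this ?_
      ring
    have h1 : HasDerivAt (fun θ : ℝ => -(ε ^ 2 * ((τ - θ) / ε) / 2 + ε * θ))
        (-(ε ^ 2 * (-(1 / ε)) / 2 + ε)) θ := by
      have := (((ha.const_mul (ε ^ 2)).div_const 2).add ((hasDerivAt_id θ).const_mul ε)).neg
      simp at this ⊢; exact this
    have h2 : HasDerivAt (fun θ : ℝ => Real.exp (-((τ - θ) / ε) ^ 2))
        ((-(2 * ((τ - θ) / ε)) * (-(1 / ε))) * Real.exp (-((τ - θ) / ε) ^ 2)) θ := by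
      have hsq : HasDerivAt (fun θ : ℝ => -((τ - θ) / ε) ^ 2)
          (-(2 * ((τ - θ) / ε)) * (-(1 / ε))) θ := by
        have := ((hasDerivAt_pow 2 ((τ - θ) / ε)).comp θ ha).neg
        simp [mul_comm, mul_assoc, mul_left_comm] at this ⊢; exact this
      have := (Real.hasDerivAt_exp (-((τ - θ) / ε) ^ 2)).comp θ hsq; simp [mul_comm] at this ⊢; exact this
    have h3 : HasDerivAt (fun θ : ℝ => erf ((τ - θ) / ε))
        ((2 / Real.sqrt Real.pi * Real.exp (-((τ - θ) / ε) ^ 2)) * (-(1 / ε))) θ :=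
      by have := (hasDerivAt_erf ((τ - θ) / ε)).comp θ ha; exact this
    have h := hq.sub (((h1.mul h2).div_const (Real.sqrt Real.pi)).add (hq.mul h3))
    refine HasDerivAt.congr_deriv h ?_
    field_simp
    ring
  have hpos : ∀ θ ∈ Ico (0:ℝ) τ,
      0 < θ + (ε ^ 2 + τ ^ 2) / (ε * Real.sqrt Real.pi) * Real.exp (-((τ - θ) / ε) ^ 2)
        - θ * erf ((τ - θ) / ε) := by
    intro θ hθ
    obtain ⟨h0, h1⟩ := hθ
    have ha : 0 ≤ (τ - θ) / ε := div_nonneg (by linarith) hε.le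
    have he : erf ((τ - θ) / ε) ≤ 1 := erf_le_one ha
    have hE : 0 < Real.exp (-((τ - θ) / ε) ^ 2) := Real.exp_pos _
    have hc : 0 < (ε ^ 2 + τ ^ 2) / (ε * Real.sqrt Real.pi) := by positivity
    nlinarith [mul_pos hc hE, mul_nonneg h0 (sub_nonneg.2 he)]
  refine ⟨fun θ hθ => ⟨hderiv θ, hpos θ hθ⟩, ?_⟩
  apply strictMonoOn_of_deriv_pos (convex_Ico 0 τ)
  · exact fun x _ => (hderiv x).continuousAt.continuousWithinAt
  · intro x hx
    rw [interior_Ico] at hx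
    rw [(hderiv x).deriv]
    exact hpos x ⟨hx.1.le, hx.2⟩
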